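/- If an F-algebra A (finitely generated) does not have property τ, then the matrix algebra M_d(A) does not have property τ for any d ≥ 1. -/

import Mathlib

open Module

/-- Property τ for a finitely generated `F`-algebra `A` with respect to a finite set
`S ⊆ A`. -/
def HasTau (F : Type) [Field F] (A : Type) [Ring A] [Algebra F A] (S : Finset A) : Prop :=
  ∃ ε : ℝ, 0 < ε ∧
    ∀ (V : Type) [AddCommGroup V] [Module F V] [FiniteDimensional F V]
      (ρ : A →ₐ[F] Module.End F V),
      (∃ v : V, v ≠ 0) →
      (∀ U : Submodule F V, (∀ a : A, U.map (ρ a) ≤ U) → U = ⊥ ∨ U = ⊤) →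
      ∀ W : Submodule F V, (finrank F W : ℝ) ≤ (finrank F V : ℝ) / 2 →
        ((finrank F ↥(W ⊔ ⨆ s ∈ S, W.map (ρ s))) : ℝ) ≥ (1 + ε) * finrank F W

/-!
A simple `A`-module `V` yields the simple `Mₙ(A)`-module `Vⁿ`: a nonzero invariant subspace of
`Vⁿ` has a nonzero invariant coordinate slice, and the matrix units spread it over all
coordinates. For `W ≤ V` the matrix units and the scalar matrices of `S` move `Wⁿ` into
`(W + ∑ s W)ⁿ`, so the expansion ratio of `Wⁿ` in `Vⁿ` is at most that of `W` in `V`, and an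
expansion constant of `Mₙ(A)` is one of `A`.
-/

namespace Submodule

section

variable {R ι : Type*} [Semiring R] {φ : ι → Type*} [∀ i, AddCommMonoid (φ i)]
  [∀ i, Module R (φ i)]

def piUnivEquiv (p : ∀ i, Submodule R (φ i)) : (∀ i, p i) ≃ₗ[R] pi Set.univ p where
  toFun f := ⟨fun i => f i, fun i _ => (f i).2⟩
  invFun g := fun i => ⟨g.1 i, g.2 i trivial⟩
  map_add' _ _ := rfl
  map_smul' _ _ := rfl

end

variable {K ι : Type*} [Field K] [Fintype ι] {φ : ι → Type*} [∀ i, AddCommGroup (φ i)]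
  [∀ i, Module K (φ i)]

theorem finrank_pi_univ [∀ i, FiniteDimensional K (φ i)] (p : ∀ i, Submodule K (φ i)) :
    finrank K (pi Set.univ p) = ∑ i, finrank K (p i) := by
  rw [← (piUnivEquiv p).finrank_eq, Module.finrank_pi_fintype]

theorem finrank_pi_univ_const {V : Type*} [AddCommGroup V] [Module K V] [FiniteDimensional K V]
    (W : Submodule K V) :
    finrank K (pi Set.univ fun _ : ι => W) = Fintype.card ι * finrank K W := by
  simp [finrank_pi_univ]

end Submodule

open Submodule

section Representation

variable {F A V : Type*} [Field F] [Ring A] [Algebra F A] [AddCommGroup V] [Module F V]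
  (ρ : A →ₐ[F] Module.End F V) (ι : Type*) [Fintype ι] [DecidableEq ι]

def IsIrreducibleRep : Prop :=
  ∀ U : Submodule F V, (∀ a : A, U.map (ρ a) ≤ U) → U = ⊥ ∨ U = ⊤

def expansion (S : Finset A) (W : Submodule F V) : Submodule F V :=
  W ⊔ ⨆ s ∈ S, W.map (ρ s)

/-- The `Mₙ(A)`-module `Vⁿ` corresponding to `V` under Morita equivalence. -/
noncomputable def matrixRep : Matrix ι ι A →ₐ[F] Module.End F (ι → V) :=
  (endVecAlgEquivMatrixEnd ι F F V).symm.toAlgHom.comp ρ.mapMatrix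

def matrixGenerators [DecidableEq A] (S : Finset A) : Finset (Matrix ι ι A) :=
  (Finset.univ.image fun p : ι × ι => Matrix.single p.1 p.2 (1 : A)) ∪
    S.image fun s => Matrix.diagonal fun _ => s

variable {ι}

theorem matrixRep_apply (M : Matrix ι ι A) (v : ι → V) (i : ι) :
    matrixRep ρ ι M v i = ∑ j, ρ (M i j) (v j) :=
  rfl

theorem matrixRep_single (i j : ι) (a : A) (v : ι → V) :
    matrixRep ρ ι (Matrix.single i j a) v = Pi.single i (ρ a (v j)) := by
  ext k
  rw [matrixRep_apply, Fintype.sum_eq_single j fun l hl => by simp [hl.symm]]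
  rcases eq_or_ne i k with rfl | hik <;> simp [*]

theorem matrixRep_diagonal_apply (a : A) (v : ι → V) (i : ι) :
    matrixRep ρ ι (Matrix.diagonal fun _ => a) v i = ρ a (v i) := by
  rw [matrixRep_apply, Fintype.sum_eq_single i fun j hj => by simp [hj.symm]]
  simp

variable {ρ}

theorem IsIrreducibleRep.matrixRep (hρ : IsIrreducibleRep ρ) :
    IsIrreducibleRep (matrixRep ρ ι) := by
  intro U hU
  refine or_iff_not_imp_left.2 fun hU0 => ?_
  obtain ⟨u, huU, hu0⟩ := exists_mem_ne_zero_of_ne_bot hU0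
  obtain ⟨k, hk⟩ := Function.ne_iff.1 hu0
  have single_mem (i j : ι) (a : A) {v : ι → V} (hv : v ∈ U) : Pi.single i (ρ a (v j)) ∈ U :=
    matrixRep_single ρ i j a v ▸ hU _ ⟨v, hv, rfl⟩
  set U' := U.comap (LinearMap.single F (fun _ : ι => V) k)
  have hU' : U' = ⊤ := by
    refine (hρ U' ?_).resolve_left fun h0 => hk ?_
    · rintro a _ ⟨v, hv, rfl⟩
      simpa [U'] using single_mem k k a hv
    · have huk : u k ∈ U' := by simpa [U'] using single_mem k k 1 huU
      rwa [h0, mem_bot] at huk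
  refine eq_top_iff'.2 fun v => Finset.univ_sum_single v ▸ U.sum_mem fun i _ => ?_
  have hv : v i ∈ U' := hU' ▸ trivial
  simpa using single_mem i k 1 hv

theorem expansion_pi_le_pi_expansion [DecidableEq A] (S : Finset A) (W : Submodule F V) :
    expansion (matrixRep ρ ι) (matrixGenerators ι S) (pi Set.univ fun _ => W) ≤
      pi Set.univ fun _ => expansion ρ S W := by
  have hW : W ≤ expansion ρ S W := le_sup_left
  refine sup_le (fun v hv i _ => hW (hv i trivial)) (iSup₂_le fun M hM => ?_)
  rintro _ ⟨v, hv, rfl⟩ i -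
  rcases Finset.mem_union.1 hM with hM | hM
  · obtain ⟨⟨j, k⟩, -, rfl⟩ := Finset.mem_image.1 hM
    rw [matrixRep_single]
    rcases eq_or_ne i j with rfl | hij
    · simpa using hW (hv k trivial)
    · simp [hij]
  · obtain ⟨s, hs, rfl⟩ := Finset.mem_image.1 hM
    rw [matrixRep_diagonal_apply]
    exact (le_biSup (fun s => W.map (ρ s)) hs).trans le_sup_right ⟨v i, hv i trivial, rfl⟩

end Representation

theorem HasTau.of_matrix {F : Type} [Field F] {A : Type} [Ring A] [Algebra F A] [DecidableEq A]
    {S : Finset A} {ι : Type} [Fintype ι] [DecidableEq ι] [Nonempty ι]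
    (h : HasTau F (Matrix ι ι A) (matrixGenerators ι S)) : HasTau F A S := by
  obtain ⟨ε, hε, hτ⟩ := h
  refine ⟨ε, hε, fun V _ _ _ ρ hV hρ W hW => ?_⟩
  obtain ⟨v, hv⟩ := hV
  have hn : (0 : ℝ) < Fintype.card ι := by exact_mod_cast Fintype.card_pos
  have hWn : (finrank F (pi Set.univ fun _ : ι => W) : ℝ) ≤ finrank F (ι → V) / 2 := by
    rw [finrank_pi_univ_const, Module.finrank_pi_fintype]
    simp only [Finset.sum_const, Finset.card_univ, smul_eq_mul, Nat.cast_mul]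
    rw [mul_div_assoc]
    gcongr
  have hVn : ∃ x : ι → V, x ≠ 0 :=
    ⟨fun _ => v, fun h => hv (congrFun h (Classical.arbitrary ι))⟩
  have hτn := hτ (ι → V) (matrixRep ρ ι) hVn (IsIrreducibleRep.matrixRep hρ) _ hWn
  have hle := finrank_mono (expansion_pi_le_pi_expansion (ι := ι) (ρ := ρ) S W)
  rw [finrank_pi_univ_const] at hle hτn
  have hscaled : (Fintype.card ι : ℝ) * ((1 + ε) * finrank F W) ≤
      Fintype.card ι * finrank F (expansion ρ S W) := by
    calc _ = (1 + ε) * (Fintype.card ι * finrank F W : ℕ) := by push_cast; ring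
      _ ≤ _ := hτn
      _ ≤ _ := by exact_mod_cast hle
  exact le_of_mul_le_mul_left hscaled hn

theorem matrix_algebra_not_hasTau_of_not_hasTau_general
    (F : Type) [Field F] (A : Type) [Ring A] [Algebra F A] [DecidableEq A]
    (S : Finset A)
    (hA : ¬ HasTau F A S) (d : ℕ) (hd : 1 ≤ d) :
    ¬ HasTau F (Matrix (Fin d) (Fin d) A)
      ((Finset.univ.image fun p : Fin d × Fin d => Matrix.single p.1 p.2 (1 : A)) ∪
        S.image fun s => Matrix.diagonal fun _ => s) := by
  have : Nonempty (Fin d) := ⟨⟨0, hd⟩⟩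
  exact fun h => hA h.of_matrix

/-- If the finitely generated `F`-algebra `A` does not have property τ, then neither
does the matrix algebra `M_d(A)` (with generating set the matrix units together with
the scalar matrices of the generators of `A`). -/
theorem matrix_algebra_not_hasTau_of_not_hasTau
    (F : Type) [Field F] (A : Type) [Ring A] [Algebra F A] [DecidableEq A]
    (S : Finset A) (hS : Algebra.adjoin F (S : Set A) = ⊤)
    (hA : ¬ HasTau F A S) (d : ℕ) (hd : 1 ≤ d) :
    ¬ HasTau F (Matrix (Fin d) (Fin d) A)
      ((Finset.univ.image fun p : Fin d × Fin d => Matrix.single p.1 p.2 (1 : A)) ∪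
        S.image fun s => Matrix.diagonal fun _ => s) :=
  matrix_algebra_not_hasTau_of_not_hasTau_general F A S hA d hd
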